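/- Let Φ be the ℂ-linear endomorphism of D×D complex matrices given by Φ(X) = ∑_k E_k X E_kᴴ for a finite family of D×D complex matrices (E_k) with ∑_k E_kᴴ E_k = I. Then Φ has an invariant state: there exists a positive semidefinite matrix ρ_ss with trace 1 such that Φ(ρ_ss) = ρ_ss. -/

import Mathlib

/-!
Averaging the orbit `x, Tx, T²x, …` of a continuous linear map `T` that preserves a compact convex
set `K` gives points `aₘ ∈ K` with `T aₘ - aₘ = (T^{m+1} x - x) / (m + 1) → 0`, so every cluster
point of `(aₘ)` is fixed by `T`. The density matrices form such a set for the Kraus map: it is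
closed, bounded because `|ρᵢⱼ|² ≤ ρᵢᵢ ρⱼⱼ`, preserved since `ρ ↦ EρEᴴ` is positive and
`tr (∑ Eₖ ρ Eₖᴴ) = tr ((∑ Eₖᴴ Eₖ) ρ) = tr ρ`, and nonempty since it contains `1 / D`.
-/

open Matrix ComplexOrder Filter Topology Function Set

attribute [local instance] Matrix.normedAddCommGroup Matrix.normedSpace

section CesaroAverage

variable {E : Type*} [NormedAddCommGroup E] [NormedSpace ℝ E]

noncomputable def cesaroAverage (T : E →L[ℝ] E) (x : E) (m : ℕ) : E :=
  ∑ k ∈ Finset.range (m + 1), ((m : ℝ) + 1)⁻¹ • T^[k] x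

variable {T : E →L[ℝ] E} {K : Set E} {x : E}

lemma cesaroAverage_mem (hK : Convex ℝ K) (hT : MapsTo T K K) (hx : x ∈ K) (m : ℕ) :
    cesaroAverage T x m ∈ K :=
  hK.sum_mem (fun _ _ => by positivity)
    (by simp only [Finset.sum_const, Finset.card_range, nsmul_eq_mul]; push_cast; field_simp)
    fun k _ => hT.iterate k hx

lemma apply_cesaroAverage_sub (T : E →L[ℝ] E) (x : E) (m : ℕ) :
    T (cesaroAverage T x m) - cesaroAverage T x m = ((m : ℝ) + 1)⁻¹ • (T^[m + 1] x - x) := by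
  simp only [cesaroAverage, map_sum, map_smul, ← iterate_succ_apply' T, ← Finset.sum_sub_distrib,
    ← smul_sub, ← Finset.smul_sum, Finset.sum_range_sub (fun k => T^[k] x), iterate_zero_apply]

lemma tendsto_apply_cesaroAverage_sub (hK : Bornology.IsBounded K) (hT : MapsTo T K K)
    (hx : x ∈ K) :
    Tendsto (fun m => T (cesaroAverage T x m) - cesaroAverage T x m) atTop (𝓝 0) := by
  refine squeeze_zero_norm (a := fun m : ℕ => Metric.diam K * ((m : ℝ) + 1)⁻¹) (fun m => ?_) ?_
  · rw [apply_cesaroAverage_sub, norm_smul, mul_comm, ← dist_eq_norm,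
      Real.norm_of_nonneg (by positivity)]
    gcongr
    exact Metric.dist_le_diam_of_mem hK (hT.iterate _ hx) hx
  · simpa using tendsto_one_div_add_atTop_nhds_zero_nat.const_mul (Metric.diam K)

theorem IsCompact.exists_isFixedPt_of_mapsTo (hKc : IsCompact K) (hKconv : Convex ℝ K)
    (hKne : K.Nonempty) (hT : MapsTo T K K) : ∃ y ∈ K, IsFixedPt T y := by
  obtain ⟨x, hx⟩ := hKne
  obtain ⟨y, hyK, φ, hφ, hlim⟩ := hKc.tendsto_subseq (cesaroAverage_mem hKconv hT hx)
  refine ⟨y, hyK, sub_eq_zero.mp (tendsto_nhds_unique ?_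
    ((tendsto_apply_cesaroAverage_sub hKc.isBounded hT hx).comp hφ.tendsto_atTop))⟩
  exact ((T.continuous.tendsto y).comp hlim).sub hlim

end CesaroAverage

namespace Matrix.PosSemidef

variable {n : Type*} {A : Matrix n n ℂ}

lemma sq_norm_apply_le (hA : A.PosSemidef) (i j : n) :
    ((‖A i j‖ ^ 2 : ℝ) : ℂ) ≤ A i i * A j j := by
  -- the principal `2 × 2` minor on `{i, j}` is nonnegative
  have hdet := (hA.submatrix ![i, j]).det_nonneg
  rw [det_fin_two, sub_nonneg] at hdet
  simpa [← hA.1.apply j i, Complex.mul_conj'] using hdet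

variable [Fintype n]

lemma apply_le_trace (hA : A.PosSemidef) (i : n) : A i i ≤ A.trace :=
  Finset.single_le_sum (f := fun k => A k k) (fun _ _ => hA.diag_nonneg) (Finset.mem_univ i)

lemma norm_apply_le_norm_trace (hA : A.PosSemidef) (i j : n) : ‖A i j‖ ≤ ‖A.trace‖ := by
  have hi := CStarAlgebra.norm_le_norm_of_nonneg_of_le hA.diag_nonneg (hA.apply_le_trace i)
  have hj := CStarAlgebra.norm_le_norm_of_nonneg_of_le hA.diag_nonneg (hA.apply_le_trace j)
  have hij := CStarAlgebra.norm_le_norm_of_nonneg_of_le (by positivity) (hA.sq_norm_apply_le i j)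
  rw [Complex.norm_real, norm_mul, Real.norm_of_nonneg (by positivity)] at hij
  refine le_of_pow_le_pow_left₀ two_ne_zero (norm_nonneg _) ?_
  calc ‖A i j‖ ^ 2 ≤ ‖A i i‖ * ‖A j j‖ := hij
    _ ≤ ‖A.trace‖ ^ 2 := sq ‖A.trace‖ ▸ mul_le_mul hi hj (norm_nonneg _) (norm_nonneg _)

end Matrix.PosSemidef

section DensityMatrices

variable {n : Type*} [Fintype n]

variable (n) in
def densityMatrices : Set (Matrix n n ℂ) :=
  {ρ | ρ.PosSemidef ∧ ρ.trace = 1}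

lemma isClosed_setOf_posSemidef : IsClosed {A : Matrix n n ℂ | A.PosSemidef} := by
  simp only [posSemidef_iff_dotProduct_mulVec, ofPred_and, ofPred_forall]
  refine (isClosed_eq continuous_id.matrix_conjTranspose continuous_id).inter
    (isClosed_iInter fun x => isClosed_le continuous_const ?_)
  fun_prop

lemma isClosed_densityMatrices : IsClosed (densityMatrices n) :=
  isClosed_setOf_posSemidef.inter (isClosed_eq continuous_id.matrix_trace continuous_const)

lemma isBounded_densityMatrices : Bornology.IsBounded (densityMatrices n) := by
  refine (Metric.isBounded_closedBall (x := 0) (r := 1)).subset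
    fun ρ (⟨hρ, htr⟩ : ρ ∈ densityMatrices n) => ?_
  rw [Metric.mem_closedBall, dist_zero_right, norm_le_iff zero_le_one]
  simpa [htr] using hρ.norm_apply_le_norm_trace

lemma isCompact_densityMatrices : IsCompact (densityMatrices n) :=
  Metric.isCompact_of_isClosed_isBounded isClosed_densityMatrices isBounded_densityMatrices

lemma convex_densityMatrices : Convex ℝ (densityMatrices n) := by
  rintro ρ ⟨hρ, hρtr⟩ σ ⟨hσ, hσtr⟩ a b ha hb hab
  refine ⟨(hρ.smul ha).add (hσ.smul hb), ?_⟩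
  simp [trace_add, trace_smul, hρtr, hσtr, ← Complex.ofReal_add, hab]

lemma inv_card_smul_one_mem_densityMatrices [DecidableEq n] [Nonempty n] :
    ((Fintype.card n : ℂ)⁻¹ • 1 : Matrix n n ℂ) ∈ densityMatrices n :=
  ⟨PosSemidef.one.smul (inv_nonneg.mpr (Nat.cast_nonneg _)), by simp [trace_smul]⟩

end DensityMatrices

section KrausMap

variable {n ι : Type*} [Fintype n] [Fintype ι]

def krausMap (E : ι → Matrix n n ℂ) : Matrix n n ℂ →ₗ[ℂ] Matrix n n ℂ where
  toFun X := ∑ k, E k * X * (E k)ᴴ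
  map_add' X Y := by simp only [Matrix.mul_add, Matrix.add_mul, Finset.sum_add_distrib]
  map_smul' c X := by
    simp only [Matrix.mul_smul, Matrix.smul_mul, Finset.smul_sum, RingHom.id_apply]

lemma krausMap_apply (E : ι → Matrix n n ℂ) (X : Matrix n n ℂ) :
    krausMap E X = ∑ k, E k * X * (E k)ᴴ := rfl

variable [DecidableEq n] {E : ι → Matrix n n ℂ}

lemma trace_krausMap (hE : ∑ k, (E k)ᴴ * E k = 1) (X : Matrix n n ℂ) :
    (krausMap E X).trace = X.trace :=
  calc (krausMap E X).trace = ∑ k, ((E k)ᴴ * E k * X).trace := by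
        simp only [krausMap_apply, trace_sum, trace_mul_cycle (E _)]
    _ = ((∑ k, (E k)ᴴ * E k) * X).trace := by rw [Finset.sum_mul, trace_sum]
    _ = X.trace := by rw [hE, Matrix.one_mul]

lemma mapsTo_krausMap_densityMatrices (hE : ∑ k, (E k)ᴴ * E k = 1) :
    MapsTo (krausMap E) (densityMatrices n) (densityMatrices n) := fun ρ ⟨hρ, htr⟩ =>
  ⟨posSemidef_sum _ fun k _ => hρ.mul_mul_conjTranspose_same (E k),
    (trace_krausMap hE ρ).trans htr⟩

end KrausMap

/-- Every CPTP map (in Kraus form) has an invariant state: a positive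
semidefinite trace-one fixed point. -/
theorem cptp_exists_invariant_state {D : ℕ} {ι : Type*} [Fintype ι]
    (E : ι → Matrix (Fin D) (Fin D) ℂ)
    (hD : 0 < D) (hE : ∑ k, (E k)ᴴ * E k = 1) :
    ∃ ρss : Matrix (Fin D) (Fin D) ℂ,
      ρss.PosSemidef ∧ ρss.trace = 1 ∧ ∑ k, E k * ρss * (E k)ᴴ = ρss := by
  have : Nonempty (Fin D) := ⟨⟨0, hD⟩⟩
  let Φ : Matrix (Fin D) (Fin D) ℂ →L[ℝ] Matrix (Fin D) (Fin D) ℂ :=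
    LinearMap.toContinuousLinearMap ((krausMap E).restrictScalars ℝ)
  obtain ⟨ρ, ⟨hρ, htr⟩, hfix⟩ := isCompact_densityMatrices.exists_isFixedPt_of_mapsTo
    convex_densityMatrices ⟨_, inv_card_smul_one_mem_densityMatrices⟩ (T := Φ)
    (mapsTo_krausMap_densityMatrices hE)
  exact ⟨ρ, hρ, htr, hfix⟩
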